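/- arXiv:2309.00430 — 2 statements merged into one kernel-verified Lean document; each statement's English description precedes it below -/
import Mathlib

section
/- Let R be an Artin local ring. Then an R-module is free if and only if it is flat. -/
section Aux

variable {R : Type*} [CommRing R] {M : Type*} [AddCommGroup M] [Module R M]

/-- Nakayama for nilpotent ideals: if `N ⊔ I • ⊤ = ⊤` and `I` is nilpotent then `N = ⊤`. -/
lemma aux_sup_eq_top {I : Ideal R} {n : ℕ} (hn : I ^ n = ⊥) {N : Submodule R M}
    (h : N ⊔ I • ⊤ = ⊤) : N = ⊤ := by
  have key : ∀ j : ℕ, (⊤ : Submodule R M) ≤ N ⊔ I ^ j • ⊤ := by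
    intro j
    induction j with
    | zero => simp
    | succ j ih =>
      refine ih.trans (sup_le le_sup_left ?_)
      calc I ^ j • (⊤ : Submodule R M) = I ^ j • (N ⊔ I • ⊤) := by rw [h]
        _ = I ^ j • N ⊔ I ^ j • (I • ⊤) := Submodule.smul_sup _ _ _
        _ ≤ N ⊔ I ^ (j + 1) • ⊤ := by
            refine sup_le_sup Submodule.smul_le_right (le_of_eq ?_)
            rw [pow_succ, ← Submodule.smul_assoc, smul_eq_mul]
  have := key n
  rw [hn, Submodule.bot_smul, sup_bot_eq] at this
  exact le_antisymm le_top this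

/-- Nakayama for nilpotent ideals: if `K ≤ I • K` and `I` is nilpotent then `K = ⊥`. -/
lemma aux_eq_bot {I : Ideal R} {n : ℕ} (hn : I ^ n = ⊥) {K : Submodule R M}
    (h : K ≤ I • K) : K = ⊥ := by
  have key : ∀ j : ℕ, K ≤ I ^ j • K := by
    intro j
    induction j with
    | zero => simp
    | succ j ih =>
      calc K ≤ I ^ j • K := ih
        _ ≤ I ^ j • (I • K) := smul_mono_right _ h
        _ = I ^ (j + 1) • K := by rw [pow_succ, ← Submodule.smul_assoc, smul_eq_mul]
  have := key n
  rwa [hn, Submodule.bot_smul, le_bot_iff] at this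

end Aux


section MulAux

open TensorProduct

variable {R : Type*} [CommRing R] (I : Ideal R)

/-- The multiplication map `I ⊗ N → N`. -/
noncomputable def auxMul (N : Type*) [AddCommGroup N] [Module R N] :
    (I ⊗[R] N) →ₗ[R] N :=
  TensorProduct.lift ((LinearMap.lsmul R N).comp I.subtype)

variable {N P : Type*} [AddCommGroup N] [Module R N] [AddCommGroup P] [Module R P]

@[simp] lemma auxMul_tmul (a : I) (y : N) : auxMul I N (a ⊗ₜ y) = (a : R) • y := rfl

lemma auxMul_naturality (g : N →ₗ[R] P) (z : I ⊗[R] N) :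
    g (auxMul I N z) = auxMul I P (g.lTensor I z) := by
  have : g.comp (auxMul I N) = (auxMul I P).comp (g.lTensor I) := by
    apply TensorProduct.ext'
    intro a y
    simp
  exact LinearMap.congr_fun this z

lemma auxMul_mem_smul_top (z : I ⊗[R] N) : auxMul I N z ∈ I • (⊤ : Submodule R N) := by
  induction z with
  | zero => simp
  | tmul a y => exact Submodule.smul_mem_smul a.2 trivial
  | add z₁ z₂ h₁ h₂ => rw [map_add]; exact Submodule.add_mem _ h₁ h₂

lemma exists_auxMul_eq {x : N} (hx : x ∈ I • (⊤ : Submodule R N)) :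
    ∃ z, auxMul I N z = x := by
  have : I • (⊤ : Submodule R N) ≤ LinearMap.range (auxMul I N) := by
    rw [Submodule.smul_le]
    intro r hr y _
    exact ⟨(⟨r, hr⟩ : I) ⊗ₜ y, rfl⟩
  exact this hx

lemma auxMul_injective_of_flat [Module.Flat R N] : Function.Injective (auxMul I N) := by
  have : auxMul I N
      = (TensorProduct.lid R N).toLinearMap.comp (I.subtype.rTensor N) := by
    apply TensorProduct.ext'
    intro a y
    simp
  rw [this, LinearMap.coe_comp]
  exact (TensorProduct.lid R N).injective.comp
    (Module.Flat.rTensor_preserves_injective_linearMap _ Subtype.val_injective)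

end MulAux


open TensorProduct in
/-- If `M` is flat, `i : F → M` surjective, and `ker i ≤ I • ⊤`, then `ker i ≤ I • ker i`. -/
lemma aux_ker_le_smul {R : Type*} [CommRing R] (I : Ideal R)
    {F M : Type*} [AddCommGroup F] [Module R F] [AddCommGroup M] [Module R M]
    [Module.Flat R M] (i : F →ₗ[R] M) (hi : Function.Surjective i)
    (hker : LinearMap.ker i ≤ I • (⊤ : Submodule R F)) :
    LinearMap.ker i ≤ I • LinearMap.ker i := by
  intro x hx
  obtain ⟨z, hz⟩ := exists_auxMul_eq I (hker hx)
  have hw0 : i.lTensor I z = 0 := by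
    apply auxMul_injective_of_flat I
    rw [map_zero, ← auxMul_naturality, hz]
    exact LinearMap.mem_ker.mp hx
  have hex : Function.Exact ((LinearMap.ker i).subtype.lTensor I) (i.lTensor I) :=
    lTensor_exact ↥I (LinearMap.exact_subtype_ker_map i) hi
  obtain ⟨u, hu⟩ := (hex z).mp hw0
  have hxu : (LinearMap.ker i).subtype (auxMul I (LinearMap.ker i) u) = x := by
    rw [auxMul_naturality, hu, hz]
  rw [← hxu]
  have hmem := Submodule.mem_map_of_mem (f := (LinearMap.ker i).subtype)
    (auxMul_mem_smul_top I u)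
  rwa [Submodule.map_smul'', Submodule.map_top, Submodule.range_subtype] at hmem

set_option maxHeartbeats 1000000 in
/-- Over a commutative Artinian local ring, a module is free
if and only if it is flat. -/
theorem statement8 (R : Type*) [CommRing R] [IsArtinianRing R] [IsLocalRing R]
    (M : Type*) [AddCommGroup M] [Module R M] :
    Module.Free R M ↔ Module.Flat R M := by
  constructor
  · intro _; infer_instance
  intro hflat
  classical
  set 𝔪 : Ideal R := IsLocalRing.maximalIdeal R with h𝔪
  obtain ⟨n, hn⟩ : IsNilpotent 𝔪 := by
    have := IsArtinianRing.isNilpotent_jacobson_bot (R := R)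
    rwa [IsLocalRing.jacobson_eq_maximalIdeal ⊥ bot_ne_top] at this
  -- the residue field and the reduction of `M`
  let k := IsLocalRing.ResidueField R
  let V := M ⧸ (𝔪 • ⊤ : Submodule R M)
  letI : Module k V := (inferInstance : Module (R ⧸ 𝔪) (M ⧸ 𝔪 • (⊤ : Submodule R M)))
  letI : IsScalarTower R k V :=
    (inferInstance : IsScalarTower R (R ⧸ 𝔪) (M ⧸ 𝔪 • (⊤ : Submodule R M)))
  -- choose a basis of `V` over `k` and lift it to `M`
  let ι := Module.Free.ChooseBasisIndex k V
  let b : Module.Basis ι k V := Module.Free.chooseBasis k V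
  choose f hf using Submodule.mkQ_surjective (𝔪 • ⊤ : Submodule R M)
  let i : (ι →₀ R) →ₗ[R] M := Finsupp.linearCombination R (f ∘ b)
  -- surjectivity of `i`
  have hi : Function.Surjective i := by
    rw [← LinearMap.range_eq_top]
    refine aux_sup_eq_top hn ?_
    have hmap : (LinearMap.range i).map (Submodule.mkQ (𝔪 • ⊤ : Submodule R M)) = ⊤ := by
      have hr : LinearMap.range i = Submodule.span R (Set.range (f ∘ ⇑b)) :=
        Finsupp.range_linearCombination R
      have himg : (Submodule.mkQ (𝔪 • ⊤ : Submodule R M)) '' Set.range (f ∘ ⇑b)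
          = Set.range ⇑b := by
        rw [← Set.range_comp]
        exact congrArg Set.range (funext fun j => hf (b j))
      rw [hr, Submodule.map_span, himg,
        ← Submodule.restrictScalars_span R k Ideal.Quotient.mk_surjective,
        b.span_eq, Submodule.restrictScalars_top]
    have := congrArg (Submodule.comap (Submodule.mkQ (𝔪 • ⊤ : Submodule R M))) hmap
    rwa [Submodule.comap_map_eq, Submodule.ker_mkQ, Submodule.comap_top] at this
  -- kernel of `i` is contained in `𝔪 • ⊤`
  have hker : LinearMap.ker i ≤ 𝔪 • (⊤ : Submodule R (ι →₀ R)) := by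
    intro x hx
    have hcoef : ∀ j, x j ∈ 𝔪 := by
      have h0 : Finsupp.linearCombination k (⇑b) (x.mapRange (IsLocalRing.residue R)
          (map_zero _)) = 0 := by
        have : Submodule.mkQ (𝔪 • ⊤ : Submodule R M) (i x) = 0 := by
          rw [LinearMap.mem_ker.mp hx, map_zero]
        rw [Finsupp.linearCombination_apply] at this ⊢
        rw [map_finsuppSum] at this
        rw [Finsupp.sum_mapRange_index (by simp)]
        rw [← this]
        refine Finsupp.sum_congr fun j _ => ?_
        have h1 : (Submodule.mkQ (𝔪 • ⊤ : Submodule R M)) ((x j) • (f ∘ ⇑b) j)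
            = (x j) • b j := by
          rw [map_smul]
          exact congrArg _ (hf (b j))
        rw [h1, ← algebraMap_smul k (x j) (b j), IsLocalRing.ResidueField.algebraMap_eq]
      have hinj := b.linearIndependent
      rw [linearIndependent_iff] at hinj
      intro j
      have := hinj _ h0
      have : IsLocalRing.residue R (x j) = 0 := by
        have := DFunLike.congr_fun this j
        simpa only [Finsupp.mapRange_apply, Finsupp.coe_zero, Pi.zero_apply] using this
      exact (IsLocalRing.residue_eq_zero_iff _).mp this
    have : x = x.sum fun j c => Finsupp.single j c := (Finsupp.sum_single x).symm
    rw [this]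
    refine Submodule.sum_mem _ fun j hj => ?_
    show Finsupp.single j (x j) ∈ 𝔪 • (⊤ : Submodule R (ι →₀ R))
    have : Finsupp.single j (x j) = (x j) • Finsupp.single j (1 : R) := by
      rw [Finsupp.smul_single, smul_eq_mul, mul_one]
    rw [this]
    exact Submodule.smul_mem_smul (hcoef j) trivial
  -- flatness: the kernel satisfies `K ≤ 𝔪 • K`
  have hK : LinearMap.ker i ≤ 𝔪 • LinearMap.ker i :=
    aux_ker_le_smul 𝔪 i hi hker
  have : LinearMap.ker i = ⊥ := aux_eq_bot hn hK
  exact Module.Free.of_equiv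
    (LinearEquiv.ofBijective i ⟨LinearMap.ker_eq_bot.mp this, hi⟩)
end

section
/- Let K be an abelian group whose torsion subgroup K_tor is ℓ-divisible for a prime ℓ. Then K ≅ D ⊕ F where D is ℓ-divisible and F has no ℓ-torsion in the sense that F is a flat ℤ_{(ℓ)}-module after localization; consequently, K ⊗ ℤ/ℓ^eℤ is a free ℤ/ℓ^eℤ-module for every e ≥ 1. -/
open TensorProduct

theorem freeA (ℓ : ℕ) (hℓ : ℓ.Prime) (e : ℕ) (he : 1 ≤ e)
    (Q : Type) [AddCommGroup Q] [Module (ZMod (ℓ ^ e)) Q]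
    (hker : ∀ x : Q, ℓ • x = 0 → ∃ y : Q, x = ℓ ^ (e - 1) • y) :
    Module.Free (ZMod (ℓ ^ e)) Q := by
  haveI : Fact ℓ.Prime := ⟨hℓ⟩
  haveI : NeZero (ℓ ^ e) := ⟨pow_ne_zero e hℓ.ne_zero⟩
  set R := ZMod (ℓ ^ e) with hR
  -- the submodule ℓ•Q
  set P : Submodule R Q := LinearMap.range (LinearMap.lsmul R Q (ℓ : R)) with hP
  have memP : ∀ x : Q, x ∈ P ↔ ∃ m : Q, x = ℓ • m := by
    intro x
    rw [hP, LinearMap.mem_range]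
    constructor
    · rintro ⟨m, rfl⟩
      exact ⟨m, by rw [LinearMap.lsmul_apply, Nat.cast_smul_eq_nsmul]⟩
    · rintro ⟨m, rfl⟩
      exact ⟨m, by rw [LinearMap.lsmul_apply, Nat.cast_smul_eq_nsmul]⟩
  set V := Q ⧸ P with hV
  set π : Q →ₗ[R] V := P.mkQ with hπ
  have hVl : ∀ v : V, ℓ • v = 0 := by
    intro v
    obtain ⟨x, rfl⟩ := P.mkQ_surjective v
    show ℓ • π x = 0
    rw [← map_nsmul]
    rw [show π = P.mkQ from rfl, Submodule.mkQ_apply, Submodule.Quotient.mk_eq_zero]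
    exact (memP _).2 ⟨x, rfl⟩
  haveI : Module (ZMod ℓ) V := AddCommGroup.zmodModule hVl
  -- a basis of V over ZMod ℓ
  let b := Module.Basis.ofVectorSpace (ZMod ℓ) V
  set ι := Module.Basis.ofVectorSpaceIndex (ZMod ℓ) V
  have hvex : ∀ i : ι, ∃ x : Q, π x = b i := fun i => P.mkQ_surjective (b i)
  choose v hv using hvex
  set N : Submodule R Q := Submodule.span R (Set.range v) with hN
  have hvN : ∀ i, v i ∈ N := fun i => Submodule.subset_span ⟨i, rfl⟩
  -- spanning
  have surjN : ∀ w : V, ∃ n ∈ N, π n = w := by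
    intro w
    have hw : w ∈ Submodule.span (ZMod ℓ) (Set.range b) := by
      rw [b.span_eq]; trivial
    induction hw using Submodule.span_induction with
    | mem x hx =>
      obtain ⟨i, rfl⟩ := hx
      exact ⟨v i, hvN i, hv i⟩
    | zero => exact ⟨0, N.zero_mem, map_zero _⟩
    | add x y _ _ hx hy =>
      obtain ⟨n, hn, rfl⟩ := hx
      obtain ⟨n', hn', rfl⟩ := hy
      exact ⟨n + n', N.add_mem hn hn', map_add _ _ _⟩
    | smul c x _ hx =>
      obtain ⟨n, hn, rfl⟩ := hx
      refine ⟨c.val • n, nsmul_mem hn c.val, ?_⟩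
      rw [map_nsmul, ← Nat.cast_smul_eq_nsmul (ZMod ℓ) c.val (π n), ZMod.natCast_val,
        ZMod.cast_id]
  have step1 : ∀ x : Q, ∃ n ∈ N, ∃ m : Q, x = n + ℓ • m := by
    intro x
    obtain ⟨n, hn, hπn⟩ := surjN (π x)
    have : π (x - n) = 0 := by rw [map_sub, hπn, sub_self]
    rw [show π = P.mkQ from rfl, Submodule.mkQ_apply, Submodule.Quotient.mk_eq_zero] at this
    obtain ⟨m, hm⟩ := (memP _).1 this
    exact ⟨n, hn, m, by rw [← hm]; abel⟩
  have stepj : ∀ j : ℕ, ∀ x : Q, ∃ n ∈ N, ∃ m : Q, x = n + ℓ ^ j • m := by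
    intro j
    induction j with
    | zero => intro x; exact ⟨0, N.zero_mem, x, by simp⟩
    | succ j ih =>
      intro x
      obtain ⟨n, hn, m, rfl⟩ := ih x
      obtain ⟨n', hn', m', rfl⟩ := step1 m
      refine ⟨n + ℓ ^ j • n', N.add_mem hn (nsmul_mem hn' _), m', ?_⟩
      rw [smul_add, pow_succ, mul_smul]
      abel
  have hNtop : (⊤ : Submodule R Q) ≤ N := by
    intro x _
    obtain ⟨n, hn, m, rfl⟩ := stepj e x
    have : (ℓ : ℕ) ^ e • m = 0 := by
      rw [← Nat.cast_smul_eq_nsmul R (ℓ ^ e) m]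
      have hc : ((ℓ ^ e : ℕ) : R) = 0 := ZMod.natCast_self _
      rw [hc, zero_smul]
    rw [this, add_zero]; exact hn
  -- linear independence
  have bind : ∀ (s : Finset ι) (g : ι → ZMod ℓ),
      ∑ i ∈ s, g i • π (v i) = 0 → ∀ i ∈ s, g i = 0 := by
    intro s g hsum
    have : ∑ i ∈ s, g i • b i = 0 := by
      rw [← hsum]; exact Finset.sum_congr rfl fun i _ => by rw [hv]
    exact linearIndependent_iff'.1 b.linearIndependent s g this
  have claim : ∀ j : ℕ, j ≤ e → ∀ (s : Finset ι) (g : ι → ℤ),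
      (∃ m : Q, (∑ i ∈ s, g i • v i) = ((ℓ : ℤ) ^ j) • m) →
      ∀ i ∈ s, ((ℓ : ℤ) ^ j) ∣ g i := by
    intro j
    induction j with
    | zero => intro _ s g _ i _; simpa using one_dvd _
    | succ j ih =>
      intro hje s g hex i hi
      obtain ⟨m, hm⟩ := hex
      have hje' : j ≤ e - 1 := by omega
      -- reduce mod ℓ
      have hmodl : ∀ i ∈ s, (ℓ : ℤ) ∣ g i := by
        have hπsum : ∑ i ∈ s, ((g i : ZMod ℓ)) • π (v i) = 0 := by
          have h1 : π (∑ i ∈ s, g i • v i) = ∑ i ∈ s, g i • π (v i) := by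
            rw [map_sum]; exact Finset.sum_congr rfl fun i _ => map_zsmul π _ _
          have h2 : π (((ℓ : ℤ) ^ j.succ) • m) = 0 := by
            rw [map_zsmul, pow_succ, mul_smul]
            have hc : (ℓ : ℤ) • π m = 0 := by rw [natCast_zsmul]; exact hVl _
            rw [hc, smul_zero]
          have h3 : ∑ i ∈ s, g i • π (v i) = 0 := by rw [← h1, hm, h2]
          rw [← h3]
          exact Finset.sum_congr rfl fun i _ => (Int.cast_smul_eq_zsmul (ZMod ℓ) (g i) _)
        intro i hi
        have := bind s (fun i => (g i : ZMod ℓ)) hπsum i hi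
        exact (ZMod.intCast_zmod_eq_zero_iff_dvd (g i) ℓ).1 this
      set h : ι → ℤ := fun i => g i / ℓ with hh
      have hgh : ∀ i ∈ s, g i = ℓ * h i := fun i hi =>
        (Int.mul_ediv_cancel' (hmodl i hi)).symm
      have hsum2 : (ℓ : ℤ) • (∑ i ∈ s, h i • v i - ((ℓ : ℤ) ^ j) • m) = 0 := by
        rw [smul_sub, Finset.smul_sum]
        have : ∑ i ∈ s, (ℓ : ℤ) • h i • v i = ∑ i ∈ s, g i • v i := by
          refine Finset.sum_congr rfl fun i hi => ?_
          rw [← mul_smul, ← hgh i hi]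
        rw [this, hm, ← mul_smul, ← pow_succ']
        abel
      have hsum3 : (ℓ : ℕ) • (∑ i ∈ s, h i • v i - ((ℓ : ℤ) ^ j) • m) = 0 := by
        rw [← natCast_zsmul]; exact hsum2
      obtain ⟨y, hy⟩ := hker _ hsum3
      have hkey : ∑ i ∈ s, h i • v i = ((ℓ : ℤ) ^ j) • (m + (ℓ : ℤ) ^ (e - 1 - j) • y) := by
        have hy' : (∑ i ∈ s, h i • v i - ((ℓ : ℤ) ^ j) • m)
            = ((ℓ : ℤ) ^ (e - 1)) • y := by
          rw [hy, ← natCast_zsmul]; norm_cast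
        have hpow : (ℓ : ℤ) ^ (e - 1) = (ℓ : ℤ) ^ j * (ℓ : ℤ) ^ (e - 1 - j) := by
          rw [← pow_add]; congr 1; omega
        rw [smul_add, ← mul_smul, ← hpow, ← hy']
        abel
      have hdvd := ih (by omega) s h ⟨_, hkey⟩ i hi
      rw [hgh i hi, pow_succ']
      exact mul_dvd_mul_left _ hdvd
  have hind : LinearIndependent R v := by
    rw [linearIndependent_iff']
    intro s g hsum i hi
    set G : ι → ℤ := fun i => ((g i).val : ℤ) with hG
    have hgG : ∀ i, g i • v i = G i • v i := by
      intro i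
      rw [hG]
      rw [natCast_zsmul, ← Nat.cast_smul_eq_nsmul R (g i).val (v i), ZMod.natCast_val,
        ZMod.cast_id]
    have hsum' : ∑ i ∈ s, G i • v i = ((ℓ : ℤ) ^ e) • (0 : Q) := by
      rw [smul_zero, ← hsum]
      exact Finset.sum_congr rfl fun i _ => (hgG i).symm
    have := claim e le_rfl s G ⟨0, hsum'⟩ i hi
    have h2 : ((ℓ ^ e : ℕ) : ℤ) ∣ ((g i).val : ℤ) := by push_cast; exact this
    have h3 : (ℓ ^ e : ℕ) ∣ (g i).val := Int.ofNat_dvd.mp h2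
    have : ((g i).val : R) = 0 := (ZMod.natCast_eq_zero_iff _ _).2 h3
    rwa [ZMod.natCast_val, ZMod.cast_id] at this
  exact Module.Free.of_basis (Module.Basis.mk hind (by rw [← hN]; exact hNtop))

/-- let `K` be an abelian group whose torsion subgroup is
`ℓ`-divisible for a prime `ℓ`. Then `K ≅ D ⊕ F` with `D` an `ℓ`-divisible
subgroup and `F` a subgroup without `ℓ`-torsion (which is what flatness over
`ℤ_{(ℓ)}` amounts to); consequently `K ⊗ ℤ/ℓ^eℤ` is a free `ℤ/ℓ^eℤ`-module for
every `e ≥ 1`. -/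
theorem statement19 (ℓ : ℕ) (hℓ : ℓ.Prime) (K : Type) [AddCommGroup K]
    (hdiv : ∀ x ∈ Submodule.torsion ℤ K, ∃ y ∈ Submodule.torsion ℤ K, ℓ • y = x) :
    (∃ D F : AddSubgroup K, IsCompl D F ∧
      (∀ x ∈ D, ∃ y ∈ D, ℓ • y = x) ∧
      (∀ x ∈ F, ∀ n : ℕ, ℓ ^ n • x = 0 → x = 0)) ∧
    (∀ e : ℕ, 1 ≤ e →
      Module.Free (ZMod (ℓ ^ e)) (TensorProduct ℤ (ZMod (ℓ ^ e)) K)) := by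
  have hdiv_pow : ∀ m : ℕ, ∀ t ∈ Submodule.torsion ℤ K,
      ∃ s ∈ Submodule.torsion ℤ K, ℓ ^ m • s = t := by
    intro m
    induction m with
    | zero => intro t ht; exact ⟨t, ht, by simp⟩
    | succ m ih =>
      intro t ht
      obtain ⟨y, hy, hyt⟩ := hdiv t ht
      obtain ⟨s, hs, hst⟩ := ih y hy
      exact ⟨s, hs, by rw [pow_succ', mul_smul, hst, hyt]⟩
  constructor
  · -- Part 1 : the splitting
    set D : AddSubgroup K :=
      { carrier := {x | ∃ n : ℕ, ℓ ^ n • x = 0}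
        zero_mem' := ⟨0, by simp⟩
        add_mem' := by
          rintro a b ⟨n, hn⟩ ⟨m, hm⟩
          have ha : ℓ ^ (n + m) • a = 0 := by
            rw [pow_add, mul_comm, mul_smul, hn, smul_zero]
          have hb : ℓ ^ (n + m) • b = 0 := by
            rw [pow_add, mul_smul, hm, smul_zero]
          exact ⟨n + m, by rw [smul_add, ha, hb, add_zero]⟩
        neg_mem' := by
          rintro a ⟨n, hn⟩
          exact ⟨n, by rw [smul_neg, hn, neg_zero]⟩ } with hD
    have hmemD : ∀ x : K, x ∈ D ↔ ∃ n : ℕ, ℓ ^ n • x = 0 := fun x => Iff.rfl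
    have hDtors : ∀ x : K, x ∈ D → x ∈ Submodule.torsion ℤ K := by
      intro x hx
      obtain ⟨n, hn⟩ := (hmemD x).1 hx
      rw [Submodule.mem_torsion_iff]
      refine ⟨⟨((ℓ ^ n : ℕ) : ℤ),
        mem_nonZeroDivisors_of_ne_zero
          (Int.natCast_ne_zero.mpr (pow_ne_zero n hℓ.ne_zero))⟩, ?_⟩
      show ((ℓ ^ n : ℕ) : ℤ) • x = 0
      rw [natCast_zsmul]; exact hn
    -- dividing by ℓ inside D
    have hD1 : ∀ x ∈ D, ∃ y ∈ D, ℓ • y = x := by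
      intro x hx
      obtain ⟨N, hN⟩ := (hmemD x).1 hx
      obtain ⟨y, hy, hyx⟩ := hdiv x (hDtors x hx)
      rw [Submodule.mem_torsion_iff] at hy
      obtain ⟨c, hcy⟩ := hy
      rw [Submonoid.smul_def] at hcy
      have hc0 : (c : ℤ) ≠ 0 := nonZeroDivisors.coe_ne_zero c
      set k : ℕ := (c : ℤ).natAbs with hk
      have hk0 : k ≠ 0 := Int.natAbs_ne_zero.mpr hc0
      have hky : (k : ℤ) • y = 0 := by
        rcases Int.natAbs_eq (c : ℤ) with h | h
        · rw [hk, ← h]; exact hcy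
        · have h2 := hcy
          rw [h, neg_smul, neg_eq_zero] at h2
          rw [hk]; exact h2
      set a₀ : ℕ := k.factorization ℓ with ha₀
      set u : ℕ := k / ℓ ^ a₀ with hu'
      have hu : ¬ ℓ ∣ u := Nat.not_dvd_ordCompl hℓ hk0
      have hku : ℓ ^ a₀ * u = k := Nat.ordProj_mul_ordCompl_eq_self k ℓ
      set M : ℕ := max a₀ N with hM
      have hcop : Nat.Coprime (ℓ ^ M) u :=
        Nat.Coprime.pow_left M ((Nat.Prime.coprime_iff_not_dvd hℓ).mpr hu)
      set s : ℤ := Nat.gcdA (ℓ ^ M) u with hs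
      set t : ℤ := Nat.gcdB (ℓ ^ M) u with ht
      have hbez : (1 : ℤ) = (ℓ : ℤ) ^ M * s + (u : ℤ) * t := by
        have := Nat.gcd_eq_gcd_ab (ℓ ^ M) u
        rw [hcop] at this
        push_cast at this
        rw [← hs, ← ht] at this
        exact this
      set b : K := ((u : ℤ) * t) • y with hb
      have hbD : b ∈ D := by
        refine (hmemD b).2 ⟨a₀, ?_⟩
        have : (ℓ ^ a₀ : ℕ) • b = ((ℓ ^ a₀ : ℕ) : ℤ) • b := (natCast_zsmul _ _).symm
        rw [this, hb, ← mul_smul]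
        have heq : ((ℓ ^ a₀ : ℕ) : ℤ) * ((u : ℤ) * t) = t * ((k : ℕ) : ℤ) := by
          push_cast
          rw [← hku]
          push_cast
          ring
        rw [heq, mul_smul, hky, smul_zero]
      refine ⟨b, hbD, ?_⟩
      have hℓN : ((ℓ : ℤ) ^ M) • x = 0 := by
        have h1 : (ℓ : ℤ) ^ M = ((ℓ ^ M : ℕ) : ℤ) := by push_cast; ring
        have h2 : ℓ ^ M • x = 0 := by
          have : M = (M - N) + N := by omega
          rw [this, pow_add, mul_smul, hN, smul_zero]
        rw [h1, natCast_zsmul]; exact h2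
      have : (ℓ : ℕ) • b = ((1 : ℤ) - (ℓ : ℤ) ^ M * s) • x := by
        rw [hb, ← natCast_zsmul, ← mul_smul]
        have hyx' : (ℓ : ℤ) • y = x := by rw [natCast_zsmul]; exact hyx
        have : (ℓ : ℤ) * ((u : ℤ) * t) = ((u : ℤ) * t) * (ℓ : ℤ) := by ring
        rw [this, mul_smul, hyx']
        have hco : (1 : ℤ) - (ℓ : ℤ) ^ M * s = (u : ℤ) * t := by
          rw [hbez]; ring
        rw [hco]
      have hms : (ℓ : ℤ) ^ M * s = s * (ℓ : ℤ) ^ M := mul_comm _ _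
      rw [this, sub_smul, one_smul, hms, mul_smul, hℓN, smul_zero, sub_zero]
    -- dividing by ℓ-powers inside D
    have hDpow : ∀ a : ℕ, ∀ x ∈ D, ∃ y ∈ D, ℓ ^ a • y = x := by
      intro a
      induction a with
      | zero => intro x hx; exact ⟨x, hx, by simp⟩
      | succ a ih =>
        intro x hx
        obtain ⟨y, hy, hyx⟩ := hD1 x hx
        obtain ⟨z, hz, hzy⟩ := ih y hy
        exact ⟨z, hz, by rw [pow_succ', mul_smul, hzy, hyx]⟩
    -- dividing by any nonzero natural inside D
    have hDn : ∀ x ∈ D, ∀ n : ℕ, n ≠ 0 → ∃ y ∈ D, n • y = x := by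
      intro x hx n hn
      obtain ⟨N, hN⟩ := (hmemD x).1 hx
      set a : ℕ := n.factorization ℓ with ha
      set u : ℕ := n / ℓ ^ a with hu'
      have hu : ¬ ℓ ∣ u := Nat.not_dvd_ordCompl hℓ hn
      have hnu : ℓ ^ a * u = n := Nat.ordProj_mul_ordCompl_eq_self n ℓ
      have hcop : Nat.Coprime (ℓ ^ N) u :=
        Nat.Coprime.pow_left N ((Nat.Prime.coprime_iff_not_dvd hℓ).mpr hu)
      set s : ℤ := Nat.gcdA (ℓ ^ N) u with hs
      set t : ℤ := Nat.gcdB (ℓ ^ N) u with ht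
      have hbez : (1 : ℤ) = (ℓ : ℤ) ^ N * s + (u : ℤ) * t := by
        have := Nat.gcd_eq_gcd_ab (ℓ ^ N) u
        rw [hcop] at this
        push_cast at this
        rw [← hs, ← ht] at this
        exact this
      have hℓN : ((ℓ : ℤ) ^ N) • x = 0 := by
        have h1 : (ℓ : ℤ) ^ N = ((ℓ ^ N : ℕ) : ℤ) := by push_cast; ring
        rw [h1, natCast_zsmul]; exact hN
      -- divide by u
      set b : K := t • x with hb
      have hbD : b ∈ D := by
        obtain ⟨N', hN'⟩ := (hmemD x).1 hx
        refine (hmemD b).2 ⟨N', ?_⟩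
        rw [hb]
        have : (ℓ ^ N' : ℕ) • t • x = t • ((ℓ ^ N' : ℕ) • x) := by
          rw [← natCast_zsmul, ← mul_smul, mul_comm, mul_smul, natCast_zsmul]
        rw [this, hN', smul_zero]
      have hub : (u : ℕ) • b = x := by
        rw [hb, ← natCast_zsmul, ← mul_smul]
        have : ((u : ℕ) : ℤ) * t = 1 - (ℓ : ℤ) ^ N * s := by rw [hbez]; ring
        have hms : (ℓ : ℤ) ^ N * s = s * (ℓ : ℤ) ^ N := mul_comm _ _
        rw [this, sub_smul, one_smul, hms, mul_smul, hℓN, smul_zero, sub_zero]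
      -- divide b by ℓ^a
      obtain ⟨y, hy, hyb⟩ := hDpow a b hbD
      refine ⟨y, hy, ?_⟩
      rw [← hnu, mul_comm, mul_smul, hyb, hub]
    -- now build the complement via injectivity
    set S : Submodule ℤ K := AddSubgroup.toIntSubmodule D with hS
    have hmemS : ∀ x : K, x ∈ S ↔ x ∈ D := fun x => Iff.rfl
    haveI hdivS : DivisibleBy ↥S ℕ := by
      refine divisibleByOfSMulRightSurj ↥S ℕ ?_
      intro n hn z
      obtain ⟨x, hx⟩ := z
      obtain ⟨y, hy, hyx⟩ := hDn x ((hmemS x).1 hx) n hn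
      exact ⟨⟨y, (hmemS y).2 hy⟩, Subtype.ext hyx⟩
    haveI : DivisibleBy ↥S ℤ := AddGroup.divisibleByIntOfDivisibleByNat ↥S
    have hbaer : Module.Baer ℤ ↥S := Module.Baer.of_divisible ↥S
    have hinj : Module.Injective ℤ ↥S := hbaer.injective
    obtain ⟨h, hh⟩ := hinj.out S.subtype S.injective_subtype LinearMap.id
    have hcompl : IsCompl S (LinearMap.ker h) :=
      LinearMap.isCompl_of_proj hh
    have hcompl' : IsCompl D (LinearMap.ker h).toAddSubgroup := by
      have h0 := (AddSubgroup.toIntSubmodule (M := K)).symm.isCompl hcompl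
      have h1 : AddSubgroup.toIntSubmodule.symm S = D :=
        AddSubgroup.toIntSubmodule.symm_apply_apply D
      have h2 : AddSubgroup.toIntSubmodule.symm (LinearMap.ker h)
          = (LinearMap.ker h).toAddSubgroup :=
        congrFun AddSubgroup.toIntSubmodule_symm _
      rwa [h1, h2] at h0
    refine ⟨D, (LinearMap.ker h).toAddSubgroup, hcompl', hD1, ?_⟩
    intro x hxF n hxn
    have hxD : x ∈ D := (hmemD x).2 ⟨n, hxn⟩
    have : x ∈ D ⊓ (LinearMap.ker h).toAddSubgroup := ⟨hxD, hxF⟩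
    rw [hcompl'.inf_eq_bot] at this
    exact this
  · -- Part 2 : freeness
    intro e he
    haveI : NeZero (ℓ ^ e) := ⟨pow_ne_zero e hℓ.ne_zero⟩
    set I : Ideal ℤ := Ideal.span {((ℓ ^ e : ℕ) : ℤ)} with hI
    set IK : Submodule ℤ K := I • (⊤ : Submodule ℤ K) with hIK
    have memIK : ∀ x : K, x ∈ IK ↔ ∃ y : K, ((ℓ ^ e : ℕ) : ℤ) • y = x := by
      intro x
      rw [hIK, hI, Submodule.ideal_span_singleton_smul]
      constructor
      · intro hx
        obtain ⟨y, -, rfl⟩ := Set.mem_smul_set.1 hx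
        exact ⟨y, rfl⟩
      · rintro ⟨y, rfl⟩
        exact Submodule.smul_mem_pointwise_smul y _ ⊤ trivial
    -- the kernel condition on the quotient
    have hkerQ : ∀ x : K ⧸ IK, ℓ • x = 0 → ∃ y : K ⧸ IK, x = ℓ ^ (e - 1) • y := by
      intro x hx
      obtain ⟨k, rfl⟩ := IK.mkQ_surjective x
      have hin : (ℓ : ℕ) • k ∈ IK := by
        rw [← Submodule.Quotient.mk_eq_zero]
        have : IK.mkQ ((ℓ : ℕ) • k) = ℓ • IK.mkQ k := map_nsmul IK.mkQ ℓ k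
        rw [Submodule.mkQ_apply] at this
        rw [this]
        exact hx
      obtain ⟨y, hy⟩ := (memIK _).1 hin
      set tt : K := k - (ℓ : ℤ) ^ (e - 1) • y with htt
      have httor : tt ∈ Submodule.torsion ℤ K := by
        rw [Submodule.mem_torsion_iff]
        refine ⟨⟨(ℓ : ℤ), mem_nonZeroDivisors_of_ne_zero
          (Int.natCast_ne_zero.mpr hℓ.ne_zero)⟩, ?_⟩
        show (ℓ : ℤ) • tt = 0
        rw [htt, smul_sub, ← mul_smul]
        have h1 : (ℓ : ℤ) * (ℓ : ℤ) ^ (e - 1) = ((ℓ ^ e : ℕ) : ℤ) := by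
          push_cast
          rw [← pow_succ']
          congr 1
          omega
        rw [h1, hy, natCast_zsmul]
        simp
      obtain ⟨ss, -, hss⟩ := hdiv_pow (e - 1) tt httor
      refine ⟨IK.mkQ (y + ss), ?_⟩
      have hk : k = ℓ ^ (e - 1) • (y + ss) := by
        have hzn : (ℓ : ℕ) ^ (e - 1) • y = (ℓ : ℤ) ^ (e - 1) • y := by
          rw [← natCast_zsmul]; push_cast; ring_nf
        rw [smul_add, hss, hzn, htt]
        abel
      rw [hk, map_nsmul]
    -- transfer along the additive equivalence with the tensor product
    have e1 : (ℤ ⧸ I) ≃ₗ[ℤ] ZMod (ℓ ^ e) :=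
      (Int.quotientSpanNatEquivZMod (ℓ ^ e)).toAddEquiv.toIntLinearEquiv
    have e2 : (ZMod (ℓ ^ e)) ⊗[ℤ] K ≃ₗ[ℤ] (ℤ ⧸ I) ⊗[ℤ] K :=
      TensorProduct.congr e1.symm (LinearEquiv.refl ℤ K)
    have e3 : (ℤ ⧸ I) ⊗[ℤ] K ≃ₗ[ℤ] K ⧸ IK :=
      TensorProduct.quotTensorEquivQuotSMul K I
    set f : (ZMod (ℓ ^ e)) ⊗[ℤ] K ≃+ (K ⧸ IK) := (e2.trans e3).toAddEquiv with hf
    refine freeA ℓ hℓ e he _ ?_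
    intro x hx
    have hfx : ℓ • f x = 0 := by
      rw [← map_nsmul, hx, map_zero]
    obtain ⟨y, hy⟩ := hkerQ (f x) hfx
    refine ⟨f.symm y, ?_⟩
    have : x = f.symm (f x) := (f.symm_apply_apply x).symm
    rw [this, hy, map_nsmul]
end
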